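/- Let φ(t) = (t−1)³/t² and ψ_k(t) = φ(t)^k · (t−1)(t−4)/t for k ≥ 1. Then the map ξ = (φ, ψ₁) : ℂ* → ℂ² is injective; moreover φ'(t) = (t−1)²(t+2)/t³ and ψ₁' share the common zero t = −2, where the curve has an A₂ cusp, and t = 1 is a singular point with φ ~ (t−1)³. -/

import Mathlib

/-! Away from the zero `t = 1` of `φ`, equal values of `(φ, ψ₁)` force equal values of
`ψ₁/φ = t - 5 + 4/t`, that is `b = a` or `b = 4/a`. Then `φ(4/a) = φ(a)` reads
`16 (a-1)³ = a (4-a)³`, i.e. `(a+2)³ (a-2) = 0`, so `a = ±2` is a fixed point of `t ↦ 4/t`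
and again `b = a`. -/

/-- First coordinate of series (k): `φ(t) = (t−1)³/t²`. -/
noncomputable def phiK : ℂ → ℂ := fun t => (t - 1) ^ 3 / t ^ 2

/-- Second coordinate for `k = 1`: `ψ₁(t) = φ(t)·(t−1)(t−4)/t`. -/
noncomputable def psiK : ℂ → ℂ := fun t => phiK t * ((t - 1) * (t - 4) / t)

lemma phiK_eq_zero_iff {t : ℂ} (ht : t ≠ 0) : phiK t = 0 ↔ t = 1 := by
  simp [phiK, ht, sub_eq_zero]

lemma eq_or_mul_eq_four_of_div_eq {a b : ℂ} (ha : a ≠ 0) (hb : b ≠ 0)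
    (h : (a - 1) * (a - 4) / a = (b - 1) * (b - 4) / b) : a = b ∨ a * b = 4 := by
  field_simp at h
  have key : (a - b) * (a * b - 4) = 0 := by linear_combination h
  rcases mul_eq_zero.mp key with h | h
  · exact .inl (sub_eq_zero.mp h)
  · exact .inr (sub_eq_zero.mp h)

lemma eq_of_phiK_eq_of_mul_eq_four {a b : ℂ} (ha : a ≠ 0) (hab : a * b = 4)
    (h : phiK a = phiK b) : a = b := by
  obtain rfl : b = 4 / a := by rw [← hab]; field_simp
  simp only [phiK] at h
  field_simp at h
  have hfac : (a + 2) ^ 3 * (a - 2) = 0 := by linear_combination h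
  have ha' : a = -2 ∨ a = 2 := by
    rcases mul_eq_zero.mp hfac with h | h
    · exact .inl (eq_neg_of_add_eq_zero_left (pow_eq_zero_iff three_ne_zero |>.mp h))
    · exact .inr (sub_eq_zero.mp h)
  rcases ha' with rfl | rfl <;> norm_num

theorem injOn_phiK_psiK : Set.InjOn (fun t : ℂ => (phiK t, psiK t)) {t : ℂ | t ≠ 0} := by
  rintro a (ha : a ≠ 0) b (hb : b ≠ 0) hab
  obtain ⟨hφ, hψ⟩ := Prod.mk.inj hab
  by_cases ha1 : a = 1
  · exact ha1.trans ((phiK_eq_zero_iff hb).mp (hφ ▸ (phiK_eq_zero_iff ha).mpr ha1)).symm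
  have hφa : phiK a ≠ 0 := (phiK_eq_zero_iff ha).not.mpr ha1
  rw [psiK, psiK, hφ] at hψ
  rcases eq_or_mul_eq_four_of_div_eq ha hb (mul_left_cancel₀ (hφ ▸ hφa) hψ) with h | h
  · exact h
  · exact eq_of_phiK_eq_of_mul_eq_four ha h hφ

lemma hasDerivAt_phiK {t : ℂ} (ht : t ≠ 0) :
    HasDerivAt phiK ((t - 1) ^ 2 * (t + 2) / t ^ 3) t := by
  refine ((((hasDerivAt_id' t).sub_const 1).fun_pow 3).fun_div (hasDerivAt_pow 2 t)
    (pow_ne_zero 2 ht)).congr_deriv ?_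
  field_simp
  ring

lemma hasDerivAt_psiK {t : ℂ} (ht : t ≠ 0) :
    HasDerivAt psiK (2 * (t - 1) ^ 3 * (t + 2) * (t - 3) / t ^ 4) t := by
  have hg := (((hasDerivAt_id' t).sub_const 1).fun_mul ((hasDerivAt_id' t).sub_const 4)).fun_div
    (hasDerivAt_id' t) ht
  refine ((hasDerivAt_phiK ht).fun_mul hg).congr_deriv ?_
  simp only [phiK]
  field_simp
  ring

lemma hasDerivAt_deriv_phiK {t : ℂ} (ht : t ≠ 0) :
    HasDerivAt (deriv phiK) (6 * (t - 1) / t ^ 4) t := by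
  refine HasDerivAt.congr_of_eventuallyEq ?_
    ((eventually_ne_nhds ht).mono fun s hs => (hasDerivAt_phiK hs).deriv)
  refine ((((hasDerivAt_id' t).sub_const 1).fun_pow 2).fun_mul ((hasDerivAt_id' t).add_const 2)
    |>.fun_div (hasDerivAt_pow 3 t) (pow_ne_zero 3 ht)).congr_deriv ?_
  field_simp
  ring

lemma hasDerivAt_iteratedDeriv_two_phiK {t : ℂ} (ht : t ≠ 0) :
    HasDerivAt (iteratedDeriv 2 phiK) (6 * (4 - 3 * t) / t ^ 5) t := by
  rw [iteratedDeriv_succ, iteratedDeriv_one]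
  refine HasDerivAt.congr_of_eventuallyEq ?_
    ((eventually_ne_nhds ht).mono fun s hs => (hasDerivAt_deriv_phiK hs).deriv)
  refine (((hasDerivAt_id' t).sub_const 1).const_mul 6).fun_div
    (hasDerivAt_pow 4 t) (pow_ne_zero 4 ht) |>.congr_deriv ?_
  field_simp
  ring

lemma iteratedDeriv_two_phiK {t : ℂ} (ht : t ≠ 0) :
    iteratedDeriv 2 phiK t = 6 * (t - 1) / t ^ 4 := by
  rw [iteratedDeriv_succ, iteratedDeriv_one, (hasDerivAt_deriv_phiK ht).deriv]

lemma iteratedDeriv_three_phiK {t : ℂ} (ht : t ≠ 0) :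
    iteratedDeriv 3 phiK t = 6 * (4 - 3 * t) / t ^ 5 := by
  rw [iteratedDeriv_succ, (hasDerivAt_iteratedDeriv_two_phiK ht).deriv]

theorem series_k_seed :
    Set.InjOn (fun t : ℂ => (phiK t, psiK t)) {t : ℂ | t ≠ 0} ∧
    (∀ t : ℂ, t ≠ 0 → deriv phiK t = (t - 1) ^ 2 * (t + 2) / t ^ 3) ∧
    deriv phiK (-2) = 0 ∧ deriv psiK (-2) = 0 ∧ iteratedDeriv 2 phiK (-2) ≠ 0 ∧
    deriv phiK 1 = 0 ∧ deriv psiK 1 = 0 ∧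
    iteratedDeriv 2 phiK 1 = 0 ∧ iteratedDeriv 3 phiK 1 ≠ 0 := by
  have hm2 : (-2 : ℂ) ≠ 0 := by norm_num
  refine ⟨injOn_phiK_psiK, fun t ht => (hasDerivAt_phiK ht).deriv, ?_⟩
  simp only [(hasDerivAt_phiK hm2).deriv, (hasDerivAt_psiK hm2).deriv, iteratedDeriv_two_phiK hm2,
    (hasDerivAt_phiK one_ne_zero).deriv, (hasDerivAt_psiK one_ne_zero).deriv,
    iteratedDeriv_two_phiK one_ne_zero, iteratedDeriv_three_phiK one_ne_zero]
  norm_num
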